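/- arXiv:1102.1472 — 2 statements merged into one kernel-verified Lean document; each statement's English description precedes it below -/
import Mathlib

section
/- Let D be a directed graph on vertex set V with a distinguished subset P ⊆ V of size δn such that the induced subgraph on V \ P is acyclic. Suppose that for every vertex v ∈ P and every subset S ⊆ V \ P with |S| ≥ (1-δ)n/10, there is a directed cycle of length k contained in S ∪ {v} passing through v. If H ⊆ V hits every directed cycle of length k in D and |H| ≤ tδn where tδ ≤ 9(1-δ)/10, then P ⊆ H. -/
/-- Deterministic core of the planted-FVS lemma: if the induced subgraph on `V \ P` is
acyclic and every vertex `v ∈ P` lies on a directed `k`-cycle inside `S ∪ {v}` for every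
large enough `S ⊆ V \ P`, then any sufficiently small hitting set `H` for the directed
`k`-cycles contains `P`. -/
theorem stmt_9 {V : Type*} [Fintype V] [DecidableEq V]
    (A : V → V → Prop) (n : ℕ) (hn : Fintype.card V = n)
    (δ t : ℝ) (hδ0 : 0 < δ) (hδ1 : δ ≤ 1) (ht : 0 < t)
    (k : ℕ) (hk : 3 ≤ k)
    (P : Finset V) (hP : (P.card : ℝ) = δ * n)
    (hacyc : ∀ m : ℕ, 1 ≤ m → ∀ f : ZMod m → V, Function.Injective f →
      (∀ i, f i ∉ P) → ¬ (∀ i, A (f i) (f (i + 1))))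
    (hcyc : ∀ v ∈ P, ∀ S : Finset V, (∀ x ∈ S, x ∉ P) →
      ((1 - δ) * n / 10 ≤ (S.card : ℝ)) →
      ∃ f : ZMod k → V, Function.Injective f ∧ (∀ i, f i ∈ insert v S) ∧
        (∃ i, f i = v) ∧ ∀ i, A (f i) (f (i + 1)))
    (H : Finset V)
    (hH : ∀ f : ZMod k → V, Function.Injective f →
      (∀ i, A (f i) (f (i + 1))) → ∃ i, f i ∈ H)
    (hsize : (H.card : ℝ) ≤ t * δ * n) (htδ : t * δ ≤ 9 * (1 - δ) / 10) :
    P ⊆ H := by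
  intro v hv
  by_contra hvH
  set S : Finset V := (Finset.univ \ P) \ H with hS
  have hSP : ∀ x ∈ S, x ∉ P := by
    intro x hx
    simp only [hS, Finset.mem_sdiff, Finset.mem_univ] at hx
    exact hx.1.2
  have hPn : P.card ≤ n := by rw [← hn]; exact Finset.card_le_univ P
  have hcard1 : (Finset.univ \ P).card = n - P.card := by
    rw [Finset.card_sdiff_of_subset (Finset.subset_univ P), Finset.card_univ, hn]
  have hcard2 : (Finset.univ \ P).card ≤ S.card + H.card :=
    Finset.card_le_card_sdiff_add_card
  have hcast : ((Finset.univ \ P).card : ℝ) = (1 - δ) * n := by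
    rw [hcard1, Nat.cast_sub hPn, hP]; ring
  have hnn : (0:ℝ) ≤ n := Nat.cast_nonneg n
  have hSbig : (1 - δ) * n / 10 ≤ (S.card : ℝ) := by
    have h2 : ((Finset.univ \ P).card : ℝ) ≤ (S.card : ℝ) + (H.card : ℝ) := by
      exact_mod_cast hcard2
    nlinarith [hsize, htδ, hcast]
  obtain ⟨f, hinj, hmem, ⟨i0, hi0⟩, hA⟩ := hcyc v hv S hSP hSbig
  obtain ⟨i, hiH⟩ := hH f hinj hA
  rcases Finset.mem_insert.mp (hmem i) with h | h
  · exact hvH (h ▸ hiH)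
  · simp only [hS, Finset.mem_sdiff] at h
    exact h.2 hiH
end

section
/- Let D be a directed graph on n vertices with a distinguished subset P of size δn, 0 < δ ≤ 9/19, such that the induced subgraph on V \ P is acyclic, and such that for every v ∈ P and every S ⊆ V \ P with |S| ≥ (1-δ)n/10 there is a directed k-cycle through v within S ∪ {v}. Then every set H hitting all directed k-cycles of D satisfies |H| ≥ |P|, and the unique minimum-cardinality hitting set for the k-cycles of D is P itself. -/
/-- Planted feedback vertex set as the unique minimum hitting set for `k`-cycles:
if `V \ P` induces an acyclic digraph, `|P| = δn` with `0 < δ ≤ 9/19`, and every `v ∈ P`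
lies on a directed `k`-cycle within `S ∪ {v}` whenever `S ⊆ V \ P` has size at least
`(1-δ)n/10`, then `P` hits all `k`-cycles, every hitting set `H` for the `k`-cycles has
`|H| ≥ |P|`, and any hitting set of cardinality `|P|` equals `P`. -/
theorem stmt_10 {V : Type*} [Fintype V] [DecidableEq V]
    (A : V → V → Prop) (n : ℕ) (hn : Fintype.card V = n)
    (δ : ℝ) (hδ0 : 0 < δ) (hδ1 : δ ≤ 9 / 19)
    (k : ℕ) (hk : 3 ≤ k)
    (P : Finset V) (hP : (P.card : ℝ) = δ * n)
    (hacyc : ∀ m : ℕ, 1 ≤ m → ∀ f : ZMod m → V, Function.Injective f →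
      (∀ i, f i ∉ P) → ¬ (∀ i, A (f i) (f (i + 1))))
    (hcyc : ∀ v ∈ P, ∀ S : Finset V, (∀ x ∈ S, x ∉ P) →
      ((1 - δ) * n / 10 ≤ (S.card : ℝ)) →
      ∃ f : ZMod k → V, Function.Injective f ∧ (∀ i, f i ∈ insert v S) ∧
        (∃ i, f i = v) ∧ ∀ i, A (f i) (f (i + 1))) :
    (∀ f : ZMod k → V, Function.Injective f →
        (∀ i, A (f i) (f (i + 1))) → ∃ i, f i ∈ P) ∧
    (∀ H : Finset V, (∀ f : ZMod k → V, Function.Injective f →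
        (∀ i, A (f i) (f (i + 1))) → ∃ i, f i ∈ H) →
      P.card ≤ H.card ∧ (H.card = P.card → H = P)) := by
  classical
  have hhit : ∀ f : ZMod k → V, Function.Injective f →
      (∀ i, A (f i) (f (i + 1))) → ∃ i, f i ∈ P := by
    intro f hf he
    by_contra h
    push_neg at h
    exact hacyc k (by omega) f hf h he
  refine ⟨hhit, ?_⟩
  intro H hH
  have hn0 : (0:ℝ) ≤ (n:ℝ) := Nat.cast_nonneg n
  have key : ¬ P ⊆ H → (P.card : ℝ) < H.card := by
    intro hns
    obtain ⟨v, hv, hvH⟩ := Finset.not_subset.mp hns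
    set S : Finset V := Finset.univ \ (P ∪ H) with hS
    have hSnP : ∀ x ∈ S, x ∉ P := by
      intro x hx
      simp only [hS, Finset.mem_sdiff, Finset.mem_union] at hx
      tauto
    have hsmall : (S.card : ℝ) < (1 - δ) * n / 10 := by
      by_contra hge
      push_neg at hge
      obtain ⟨f, hfinj, hfm, ⟨i0, hi0⟩, hfe⟩ := hcyc v hv S hSnP hge
      obtain ⟨j, hj⟩ := hH f hfinj hfe
      rcases Finset.mem_insert.mp (hfm j) with h1 | h2
      · exact hvH (h1 ▸ hj)
      · simp only [hS, Finset.mem_sdiff, Finset.mem_union] at h2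
        tauto
    -- card of complement of P
    have hPle : P.card ≤ n := hn ▸ Finset.card_le_univ P
    have hcompl : ((Finset.univ \ P).card : ℝ) = (n:ℝ) - δ * n := by
      rw [Finset.card_sdiff_of_subset (Finset.subset_univ P), Finset.card_univ, hn,
        Nat.cast_sub hPle, hP]
    have hsplit : (Finset.univ \ P).card ≤ S.card + H.card := by
      have hsub : Finset.univ \ P ⊆ S ∪ H := by
        intro x hx
        simp only [hS, Finset.mem_sdiff, Finset.mem_union] at hx ⊢
        tauto
      calc (Finset.univ \ P).card ≤ (S ∪ H).card := Finset.card_le_card hsub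
        _ ≤ S.card + H.card := Finset.card_union_le S H
    have hsplit' : ((Finset.univ \ P).card : ℝ) ≤ (S.card : ℝ) + H.card := by
      exact_mod_cast hsplit
    have hδn : δ * n ≤ (9/19) * n := by nlinarith
    nlinarith
  constructor
  · by_cases hsub : P ⊆ H
    · exact Finset.card_le_card hsub
    · have := key hsub
      exact_mod_cast this.le
  · intro hcard
    by_cases hsub : P ⊆ H
    · exact (Finset.eq_of_subset_of_card_le hsub hcard.le).symm
    · have := key hsub
      rw [hcard] at this
      exact absurd this (lt_irrefl _)
end
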